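/- arXiv:1412.5923 — 7 statements merged into one kernel-verified Lean document; each statement's English description precedes it below -/
import Mathlib

section
/- Let G be a finite nilpotent group and let β : Γ → Hol(G) be an injective group homomorphism whose image acts regularly on G. Then for every prime p, the set Δ_p = {γ ∈ Γ : β(γ)·e_G lies in the Hall p'-subgroup H_p of G} is a subgroup of Γ of order |H_p|. -/
/-- The holomorph `Hol(G) = G ⋊ Aut(G)`. -/
abbrev Hol (G : Type*) [Group G] : Type _ :=
  G ⋊[MonoidHom.id (MulAut G)] MulAut G

/-- The natural action of `Hol(G)` on `G`: `[g, α] · x = g * α x`. -/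
def holAct {G : Type*} [Group G] (h : Hol G) (x : G) : G :=
  h.left * h.right x

/-- In a finite group, an element of the product-of-Sylows group is a `p'`-element iff its
`p`-component is trivial. -/
lemma pprime_iff_component_one {G : Type*} [Group G] [Finite G]
    {p : ℕ} (hp : p.Prime) (hmem : p ∈ (Nat.card G).primeFactors)
    (z : ∀ q : (Nat.card G).primeFactors, ∀ P : Sylow (q : ℕ) G, (↑P : Subgroup G)) :
    (orderOf z).Coprime p ↔ z ⟨p, hmem⟩ = 1 := by
  haveI := Fact.mk hp
  constructor
  · intro h
    funext P
    have hdvd : orderOf (z ⟨p, hmem⟩ P) ∣ orderOf z := by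
      simpa using orderOf_map_dvd ((Pi.evalMonoidHom _ P).comp
        (Pi.evalMonoidHom (fun q : (Nat.card G).primeFactors =>
          ∀ P : Sylow (q : ℕ) G, (↑P : Subgroup G)) ⟨p, hmem⟩)) z
    obtain ⟨k, hk⟩ := P.isPGroup' (z ⟨p, hmem⟩ P)
    have hdvd2 : orderOf (z ⟨p, hmem⟩ P) ∣ p ^ k := orderOf_dvd_of_pow_eq_one hk
    have hc : (orderOf (z ⟨p, hmem⟩ P)).Coprime (p ^ k) :=
      (Nat.Coprime.coprime_dvd_left hdvd h).pow_right k
    have h1 : orderOf (z ⟨p, hmem⟩ P) = 1 := hc.eq_one_of_dvd hdvd2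
    exact orderOf_eq_one_iff.mp h1
  · intro h
    have hn0 : orderOf z ≠ 0 := (orderOf_pos z).ne'
    rw [Nat.coprime_comm, hp.coprime_iff_not_dvd]
    intro hpd
    set n := orderOf z with hn
    have hw : z ^ (n / p) = 1 := by
      funext i P
      by_cases hip : i = ⟨p, hmem⟩
      · subst hip
        simp [h]
      · -- component lives in a q-Sylow with q ≠ p
        haveI := Fact.mk (Nat.prime_of_mem_primeFactors i.2)
        have hpow : ((z ^ (n / p)) i P) ^ p = 1 := by
          have : (z ^ (n / p)) ^ p = 1 := by
            rw [← pow_mul, Nat.div_mul_cancel hpd, hn, pow_orderOf_eq_one]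
          calc ((z ^ (n / p)) i P) ^ p = ((z ^ (n / p)) ^ p) i P := rfl
            _ = 1 := by rw [this]; rfl
        obtain ⟨k, hk⟩ := P.isPGroup' ((z ^ (n / p)) i P)
        have hq : (i : ℕ) ≠ p := fun hq => hip (Subtype.ext hq)
        have hcop : Nat.Coprime p ((i : ℕ) ^ k) :=
          (Nat.coprime_primes hp (Nat.prime_of_mem_primeFactors i.2) |>.mpr hq.symm).pow_right k
        have h1 : orderOf ((z ^ (n / p)) i P) = 1 :=
          Nat.Coprime.eq_one_of_dvd
            (Nat.Coprime.coprime_dvd_left (orderOf_dvd_of_pow_eq_one hpow) hcop)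
            (orderOf_dvd_of_pow_eq_one hk)
        exact orderOf_eq_one_iff.mp h1
    have hdvd : n ∣ n / p := by rw [hn] at hw ⊢; exact orderOf_dvd_of_pow_eq_one hw
    have hlt : n / p < n := Nat.div_lt_self (Nat.pos_of_ne_zero hn0) hp.one_lt
    have hpos : 0 < n / p := Nat.div_pos (Nat.le_of_dvd (Nat.pos_of_ne_zero hn0) hpd) hp.pos
    exact absurd (Nat.le_of_dvd hpos hdvd) (not_le.mpr hlt)

/-- In a finite nilpotent group, the product of two `p'`-elements is a `p'`-element. -/
lemma coprime_orderOf_mul {G : Type*} [Group G] [Finite G] [Group.IsNilpotent G]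
    {p : ℕ} (hp : p.Prime) {a b : G} (ha : (orderOf a).Coprime p)
    (hb : (orderOf b).Coprime p) : (orderOf (a * b)).Coprime p := by
  by_cases hpd : p ∣ Nat.card G
  · have hmem : p ∈ (Nat.card G).primeFactors :=
      Nat.mem_primeFactors.mpr ⟨hp, hpd, Nat.card_pos.ne'⟩
    obtain ⟨e⟩ := ((isNilpotent_of_finite_tfae (G := G)).out 0 4).mp (by infer_instance)
    have hx : (orderOf (e.symm a)).Coprime p := by rwa [e.symm.orderOf_eq a]
    have hy : (orderOf (e.symm b)).Coprime p := by rwa [e.symm.orderOf_eq b]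
    have hxy : (orderOf (e.symm a * e.symm b)).Coprime p := by
      rw [pprime_iff_component_one hp hmem]
      have h1 := (pprime_iff_component_one hp hmem _).mp hx
      have h2 := (pprime_iff_component_one hp hmem _).mp hy
      simp [Pi.mul_apply, h1, h2]
    have : a * b = e (e.symm a * e.symm b) := by simp
    rw [this, e.orderOf_eq]
    exact hxy
  · have hc : (Nat.card G).Coprime p :=
      Nat.coprime_comm.mp (hp.coprime_iff_not_dvd.mpr hpd)
    exact Nat.Coprime.coprime_dvd_left (orderOf_dvd_natCard _) hc

/-- If `G` is a finite nilpotent group and `β : Γ → Hol(G)` is an injective homomorphism with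
regular image, then for every prime `p` the set
`Δ_p = {γ | β(γ)·e ∈ H_p}`, where `H_p` is the Hall `p'`-subgroup of `G`
(the set of elements of order prime to `p`), is a subgroup of `Γ` of order `|H_p|`. -/
theorem delta_p_subgroup {G Γ : Type*} [Group G] [Finite G] [Group.IsNilpotent G]
    [Group Γ] [Finite Γ] (β : Γ →* Hol G) (hinj : Function.Injective β)
    (hreg : ∀ x y : G, ∃! γ : Γ, holAct (β γ) x = y) (p : ℕ) (hp : p.Prime) :
    ∃ Δ : Subgroup Γ,
      (Δ : Set Γ) = {γ : Γ | (orderOf (holAct (β γ) 1)).Coprime p} ∧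
      Nat.card Δ = Nat.card {g : G | (orderOf g).Coprime p} := by
  classical
  have hact : ∀ h k : Hol G, ∀ x : G, holAct (h * k) x = holAct h (holAct k x) := by
    intro h k x
    simp [holAct, SemidirectProduct.mul_left, SemidirectProduct.mul_right, map_mul, mul_assoc]
  have hone : ∀ γ : Γ, holAct (β γ) 1 = (β γ).left := by
    intro γ; simp [holAct]
  have hmul : ∀ γ δ : Γ, holAct (β (γ * δ)) 1 = holAct (β γ) 1 * (β γ).right (holAct (β δ) 1) := by
    intro γ δ
    simp only [map_mul, hact, holAct, hone, map_one, mul_one, SemidirectProduct.mul_left]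
    rfl
  have horder : ∀ (α : MulAut G) (g : G), orderOf (α g) = orderOf g := fun α g =>
    (α : G ≃* G).orderOf_eq g
  refine ⟨{ carrier := {γ : Γ | (orderOf (holAct (β γ) 1)).Coprime p}
            one_mem' := by simp [holAct]
            mul_mem' := by
              intro a b ha hb
              simp only [Set.mem_setOf_eq] at *
              rw [hmul]
              exact coprime_orderOf_mul hp ha (by rw [horder]; exact hb)
            inv_mem' := by
              intro a ha
              simp only [Set.mem_setOf_eq] at *
              have h1 : holAct (β (a⁻¹ * a)) 1 = 1 := by simp [holAct]
              rw [hmul] at h1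
              have h2 : holAct (β a⁻¹) 1 = ((β a⁻¹).right (holAct (β a) 1))⁻¹ :=
                eq_inv_of_mul_eq_one_left h1
              rw [h2, orderOf_inv, horder]
              exact ha }, rfl, ?_⟩
  refine Nat.card_eq_of_bijective
    (fun γ : {γ : Γ | (orderOf (holAct (β γ) 1)).Coprime p} =>
      (⟨holAct (β γ.1) 1, γ.2⟩ : {g : G | (orderOf g).Coprime p})) ⟨?_, ?_⟩
  · rintro ⟨γ₁, h₁⟩ ⟨γ₂, h₂⟩ h
    have h' : holAct (β γ₁) 1 = holAct (β γ₂) 1 := congrArg Subtype.val h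
    obtain ⟨c, _, hu⟩ := hreg 1 (holAct (β γ₁) 1)
    exact Subtype.ext ((hu _ rfl).trans (hu _ h'.symm).symm)
  · rintro ⟨g, hg⟩
    obtain ⟨γ, hγ, -⟩ := hreg 1 g
    exact ⟨⟨γ, show (orderOf (holAct (β γ) 1)).Coprime p by rw [hγ]; exact hg⟩, Subtype.ext hγ⟩
end

section
/- For every m ≥ 1, the maximal order of an abelian subgroup of the symmetric group S_m is at most 3^(m/3), i.e., a(S_m)^3 ≤ 3^m. -/
/-!
An abelian group acting faithfully is determined by where it sends one point of each orbit,
because `g • x` determines `g` on the whole orbit of `x` when `g` commutes with the group. Hence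
an abelian subgroup of `S_m` has order at most the product of its orbit lengths `k₁, …, kᵣ`, and
`(k₁ ⋯ kᵣ)³ ≤ 3 ^ (k₁ + ⋯ + kᵣ) = 3 ^ m` because `k³ ≤ 3ᵏ` for every natural number `k`.
-/

/-- `maxAb G` is the maximal order of an abelian subgroup of `G`. -/
noncomputable def maxAb (G : Type*) [Group G] : ℕ :=
  sSup {n | ∃ H : Subgroup G, IsMulCommutative H ∧ Nat.card H = n}

theorem Nat.pow_three_le_three_pow (n : ℕ) : n ^ 3 ≤ 3 ^ n := by
  obtain hn | hn := lt_or_ge n 3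
  · interval_cases n <;> norm_num
  induction n, hn using Nat.le_induction with
  | base => norm_num
  | succ k hk ih =>
    calc (k + 1) ^ 3 ≤ 3 * k ^ 3 := by
          nlinarith [Nat.mul_le_mul_right (k ^ 2) hk, Nat.mul_le_mul_right k hk]
      _ ≤ 3 * 3 ^ k := Nat.mul_le_mul_left 3 ih
      _ = 3 ^ (k + 1) := by ring

theorem Finset.prod_pow_three_le_three_pow_sum {ι : Type*} (s : Finset ι) (f : ι → ℕ) :
    (∏ i ∈ s, f i) ^ 3 ≤ 3 ^ ∑ i ∈ s, f i := by
  rw [← Finset.prod_pow, ← Finset.prod_pow_eq_pow_sum]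
  exact Finset.prod_le_prod' fun i _ => Nat.pow_three_le_three_pow (f i)

namespace MulAction

variable {G α : Type*} [Group G] [MulAction G α] [IsMulCommutative G]

theorem smul_eq_smul_of_mem_orbit {g h : G} {x y : α} (hgh : g • x = h • x)
    (hy : y ∈ orbit G x) : g • y = h • y := by
  obtain ⟨k, rfl⟩ := hy
  rw [smul_smul, smul_smul, mul_comm' g k, mul_comm' h k, mul_smul, mul_smul, hgh]

variable [FaithfulSMul G α]

theorem injective_smul_orbit_section (x : ∀ ω : orbitRel.Quotient G α, ω.orbit) :
    Function.Injective fun (g : G) ω => g • x ω := by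
  intro g h hgh
  refine FaithfulSMul.eq_of_smul_eq_smul (α := α) fun y => ?_
  have hxy : y ∈ orbit G (x ⟦y⟧ : α) := by
    have hmem := (x ⟦y⟧).2
    rw [orbitRel.Quotient.mem_orbit] at hmem
    exact Quotient.exact hmem.symm
  exact smul_eq_smul_of_mem_orbit (congrArg Subtype.val (congrFun hgh ⟦y⟧)) hxy

theorem card_pow_three_le_three_pow_card [Finite α] : Nat.card G ^ 3 ≤ 3 ^ Nat.card α := by
  have := Fintype.ofFinite (orbitRel.Quotient G α)
  let x : ∀ ω : orbitRel.Quotient G α, ω.orbit := fun ω => ⟨_, ω.nonempty_orbit.some_mem⟩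
  calc Nat.card G ^ 3 ≤ (∏ ω : orbitRel.Quotient G α, Nat.card ω.orbit) ^ 3 := by
        rw [← Nat.card_pi]
        gcongr
        exact Nat.card_le_card_of_injective _ (injective_smul_orbit_section x)
    _ ≤ 3 ^ ∑ ω : orbitRel.Quotient G α, Nat.card ω.orbit :=
        Finset.prod_pow_three_le_three_pow_sum _ _
    _ = 3 ^ Nat.card α := by
        rw [← Nat.card_sigma, Nat.card_congr (selfEquivSigmaOrbits' G α)]

end MulAction

theorem exists_isMulCommutative_card_eq_maxAb (G : Type*) [Group G] [Finite G] :
    ∃ H : Subgroup G, IsMulCommutative H ∧ Nat.card H = maxAb G := by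
  show maxAb G ∈ {n | ∃ H : Subgroup G, IsMulCommutative H ∧ Nat.card H = n}
  refine Nat.sSup_mem ?_ ?_
  · exact ⟨1, ⊥, inferInstance, Subgroup.card_bot⟩
  · refine ⟨Nat.card G, ?_⟩
    rintro _ ⟨H, -, rfl⟩
    exact Subgroup.card_le_card_group H

theorem maxAb_symm_le_general (m : ℕ) :
    (maxAb (Equiv.Perm (Fin m))) ^ 3 ≤ 3 ^ m := by
  obtain ⟨H, hH, hcard⟩ := exists_isMulCommutative_card_eq_maxAb (Equiv.Perm (Fin m))
  rw [← hcard]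
  simpa using MulAction.card_pow_three_le_three_pow_card (G := H) (α := Fin m)

/-- The maximal order of an abelian subgroup of `S_m` is at most `3^(m/3)`,
i.e. `a(S_m)^3 ≤ 3^m`. -/
theorem maxAb_symm_le (m : ℕ) (hm : 1 ≤ m) :
    (maxAb (Equiv.Perm (Fin m))) ^ 3 ≤ 3 ^ m :=
  maxAb_symm_le_general m
end

section
/- Let G be a finite group, H a nontrivial proper characteristic subgroup of G, and β : Γ → Hol(G) a regular embedding with Γ abelian. Then the induced map β̄ : Γ → Hol(G/H) has regular image, and its kernel Σ satisfies |Σ| = |H| with β restricting to a regular embedding Σ → Hol(H). -/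
section Aux

variable {G : Type*} [Group G]

lemma holAct_mul (a b : Hol G) (x : G) : holAct (a * b) x = holAct a (holAct b x) := by
  simp [holAct, mul_assoc]

lemma holAct_one (x : G) : holAct (1 : Hol G) x = x := by
  simp [holAct]

lemma holAct_eq_one_of_fixes (h : Hol G) (hh : ∀ x, holAct h x = x) : h = 1 := by
  have h1 : h.left = 1 := by simpa [holAct] using hh 1
  ext
  · simp [h1]
  · show h.right _ = _
    have := hh ‹G›
    rw [holAct, h1, one_mul] at this
    simp [this]

variable (H : Subgroup G) [H.Normal] [H.Characteristic]

/-- The induced automorphism of `G ⧸ H` for `H` characteristic. -/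
def autQuot : MulAut G →* MulAut (G ⧸ H) where
  toFun α := QuotientGroup.congr H H (α : G ≃* G)
    (Subgroup.characteristic_iff_map_eq.mp inferInstance _)
  map_one' := by
    ext q
    induction q using QuotientGroup.induction_on
    rfl
  map_mul' a b := by
    ext q
    induction q using QuotientGroup.induction_on
    rfl

/-- The induced homomorphism `Hol G →* Hol (G ⧸ H)`. -/
def holQuot : Hol G →* Hol (G ⧸ H) :=
  SemidirectProduct.map (QuotientGroup.mk' H) (autQuot H) (fun _ => by ext x; rfl)

lemma holQuot_act (h : Hol G) (x : G) :
    holAct (holQuot H h) (↑x) = ↑(holAct h x) := rfl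

/-- Restriction of an automorphism to an invariant subgroup. -/
def autRestrict (α : MulAut G) (h1 : ∀ x ∈ H, α x ∈ H) (h2 : ∀ x ∈ H, α.symm x ∈ H) :
    MulAut H where
  toFun x := ⟨α (x : G), h1 x x.2⟩
  invFun x := ⟨α.symm (x : G), h2 x x.2⟩
  left_inv x := Subtype.ext (α.symm_apply_apply (x : G))
  right_inv x := Subtype.ext (α.apply_symm_apply (x : G))
  map_mul' x y := Subtype.ext (map_mul α (x : G) (y : G))

end Aux

/-- Let `G` be a finite group, `H` a nontrivial proper characteristic subgroup, and
`β : Γ → Hol(G)` a regular embedding with `Γ` abelian. Then the induced map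
`β̄ : Γ → Hol(G/H)` has regular image, its kernel `Σ` has order `|H|`, and `β` restricts
to a regular embedding `Σ → Hol(H)`. -/
theorem induced_regular_embedding {G Γ : Type*} [Group G] [Finite G] [CommGroup Γ] [Finite Γ]
    (H : Subgroup G) [H.Characteristic] (hbot : H ≠ ⊥) (htop : H ≠ ⊤)
    (β : Γ →* Hol G) (hinj : Function.Injective β)
    (hreg : ∀ x y : G, ∃! γ : Γ, holAct (β γ) x = y) :
    ∃ βbar : Γ →* Hol (G ⧸ H),
      -- `βbar` is the map induced by `β` on the quotient
      (∀ (γ : Γ) (x : G), holAct (βbar γ) (↑x) = ↑(holAct (β γ) x)) ∧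
      -- the image of `βbar` acts transitively on `G/H` ...
      (∀ y z : G ⧸ H, ∃ γ : Γ, holAct (βbar γ) y = z) ∧
      -- ... with trivial point stabilizers, i.e. the image is regular
      (∀ (γ : Γ) (y : G ⧸ H), holAct (βbar γ) y = y → βbar γ = 1) ∧
      -- the kernel `Σ` of `βbar` has order `|H|`
      Nat.card βbar.ker = Nat.card H ∧
      -- and `β` restricts to a regular embedding `Σ → Hol(H)`
      ∃ β' : βbar.ker →* Hol H, Function.Injective β' ∧
        (∀ (σ : βbar.ker) (x : H), ((holAct (β' σ) x : H) : G) = holAct (β σ.1) (x : G)) ∧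
        ∀ x y : H, ∃! σ : βbar.ker, holAct (β' σ) x = y := by
  classical
  set βbar : Γ →* Hol (G ⧸ H) := (holQuot H).comp β with hβbar
  have hact : ∀ (γ : Γ) (x : G), holAct (βbar γ) (↑x) = ↑(holAct (β γ) x) := fun γ x => rfl
  -- transitivity
  have htrans : ∀ y z : G ⧸ H, ∃ γ : Γ, holAct (βbar γ) y = z := by
    intro y z
    induction y using QuotientGroup.induction_on with | H a =>
    induction z using QuotientGroup.induction_on with | H b =>
    obtain ⟨γ, hγ, -⟩ := hreg a b
    exact ⟨γ, by rw [hact, hγ]⟩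
  -- trivial stabilizers
  have hstab : ∀ (γ : Γ) (y : G ⧸ H), holAct (βbar γ) y = y → βbar γ = 1 := by
    intro γ y hy
    apply holAct_eq_one_of_fixes
    intro z
    obtain ⟨τ, hτ⟩ := htrans y z
    calc holAct (βbar γ) z = holAct (βbar γ) (holAct (βbar τ) y) := by rw [hτ]
      _ = holAct (βbar γ * βbar τ) y := (holAct_mul _ _ _).symm
      _ = holAct (βbar τ * βbar γ) y := by rw [← map_mul, ← map_mul, mul_comm]
      _ = holAct (βbar τ) (holAct (βbar γ) y) := holAct_mul _ _ _
      _ = z := by rw [hy, hτ]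
  -- kernel elements act on H
  have hker_act : ∀ {σ : Γ}, βbar σ = 1 → ∀ x ∈ H, holAct (β σ) x ∈ H := by
    intro σ hσ x hx
    rw [← QuotientGroup.eq_one_iff] at hx ⊢
    rw [← hact, hσ, holAct_one]
    exact hx
  have hker_left : ∀ {σ : Γ}, βbar σ = 1 → (β σ).left ∈ H := by
    intro σ hσ
    have := hker_act hσ 1 (one_mem H)
    simpa [holAct] using this
  have hker_right : ∀ {σ : Γ}, βbar σ = 1 → ∀ x ∈ H, (β σ).right x ∈ H := by
    intro σ hσ x hx
    have h1 := H.mul_mem (H.inv_mem (hker_left hσ)) (hker_act hσ x hx)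
    rwa [holAct, inv_mul_cancel_left] at h1
  have hker_right_symm : ∀ {σ : Γ}, βbar σ = 1 → ∀ x ∈ H, (β σ).right.symm x ∈ H := by
    intro σ hσ x hx
    have hσ' : βbar σ⁻¹ = 1 := by rw [map_inv, hσ, inv_one]
    have : (β σ⁻¹).right x ∈ H := hker_right hσ' x hx
    have hr : (β σ⁻¹).right = (β σ).right⁻¹ := by rw [map_inv]; rfl
    rwa [hr] at this
  -- the restricted embedding
  set β' : βbar.ker →* Hol H :=
    { toFun := fun σ =>
        ⟨⟨(β σ.1).left, hker_left σ.2⟩,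
          autRestrict H (β σ.1).right (hker_right σ.2) (hker_right_symm σ.2)⟩
      map_one' := by
        ext
        · simp
        · simp [autRestrict]
      map_mul' := fun σ τ => by
        have h := map_mul β σ.1 τ.1
        ext
        · simp [h, autRestrict]
        · simp [h, autRestrict] } with hβ'
  have hcomm : ∀ (σ : βbar.ker) (x : H), ((holAct (β' σ) x : H) : G) = holAct (β σ.1) (x : G) :=
    fun σ x => rfl
  -- injectivity of β'
  have hinj' : Function.Injective β' := by
    intro σ τ h
    have h1 : holAct (β σ.1) 1 = holAct (β τ.1) 1 := by
      have h2 : ((β σ.1).left : G) = (β τ.1).left :=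
        congrArg (fun p : Hol H => ((p.left : H) : G)) h
      simp [holAct, h2]
    exact Subtype.ext ((hreg 1 (holAct (β τ.1) 1)).unique h1 rfl)
  -- regularity of β'
  have hreg' : ∀ x y : H, ∃! σ : βbar.ker, holAct (β' σ) x = y := by
    intro x y
    obtain ⟨γ, hγ, huniq⟩ := hreg (x : G) (y : G)
    have hγker : γ ∈ βbar.ker := by
      apply hstab γ ((x : G) : G ⧸ H)
      rw [hact, hγ]
      have hx1 : ((x : G) : G ⧸ H) = 1 := (QuotientGroup.eq_one_iff _).2 x.2
      have hy1 : ((y : G) : G ⧸ H) = 1 := (QuotientGroup.eq_one_iff _).2 y.2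
      rw [hx1, hy1]
    refine ⟨⟨γ, hγker⟩, ?_, ?_⟩
    · ext
      rw [hcomm]
      exact hγ
    · intro τ hτ
      apply Subtype.ext
      apply huniq
      rw [← hcomm τ x, hτ]
  -- cardinality of the kernel
  have hcard : Nat.card βbar.ker = Nat.card H := by
    apply Nat.card_eq_of_bijective (fun σ => holAct (β' σ) 1)
    constructor
    · intro σ τ h
      exact ((hreg' 1 (holAct (β' τ) 1)).unique h rfl)
    · intro y
      obtain ⟨σ, hσ, -⟩ := hreg' 1 y
      exact ⟨σ, hσ⟩
  exact ⟨βbar, hact, htrans, hstab, hcard, β', hinj', hcomm, hreg'⟩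
end

section
/- Let G be a finite group containing subgroups H and J with |H|·|J| = |G| and H ∩ J = {e}. Then the map β : H × J → Hol(G) defined by β(h,j)(x) = h·x·j^{-1} is an injective group homomorphism whose image acts regularly on G. -/
/-- If `G` contains complementary subgroups `H`, `J` (i.e. `|H|·|J| = |G|` and
`H ∩ J = {e}`), then the map `β : H × J → Hol(G)` with `β(h,j)(x) = h·x·j⁻¹` is an
injective homomorphism whose image acts regularly on `G`. -/
theorem complementary_gives_regular_embedding {G : Type*} [Group G] [Finite G]
    (H J : Subgroup G) (hcard : Nat.card H * Nat.card J = Nat.card G)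
    (hinf : H ⊓ J = ⊥) :
    ∃ β : H × J →* Hol G,
      (∀ (h : H) (j : J) (x : G), holAct (β (h, j)) x = (h : G) * x * (j : G)⁻¹) ∧
      Function.Injective β ∧
      ∀ x y : G, ∃! hj : H × J, holAct (β hj) x = y := by
  classical
  -- the basic map (h,j) ↦ h * j⁻¹
  set g : H × J → G := fun hj => (hj.1 : G) * (hj.2 : G)⁻¹ with hg
  have hg_inj : Function.Injective g := by
    rintro ⟨h₁, j₁⟩ ⟨h₂, j₂⟩ heq
    simp only [hg] at heq
    have key : ((h₂ : G))⁻¹ * h₁ = (j₂ : G)⁻¹ * j₁ := by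
      have : (h₁ : G) = h₂ * ((j₂ : G)⁻¹ * j₁) := by
        rw [← mul_assoc, ← heq]; group
      rw [this]; group
    have hmem : ((h₂⁻¹ * h₁ : H) : G) ∈ H ⊓ J := by
      constructor
      · exact (h₂⁻¹ * h₁ : H).2
      · show ((h₂⁻¹ * h₁ : H) : G) ∈ J
        push_cast
        rw [key]
        exact mul_mem (inv_mem j₂.2) j₁.2
    rw [hinf, Subgroup.mem_bot] at hmem
    have hH : (h₁ : G) = h₂ := by
      have : ((h₂ : G))⁻¹ * h₁ = 1 := by push_cast at hmem; exact hmem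
      exact (inv_mul_eq_one.mp this).symm ▸ rfl
    have hJ : (j₁ : G) = j₂ := by
      have : ((j₂ : G))⁻¹ * j₁ = 1 := by
        rw [← key]; push_cast at hmem; exact hmem
      exact (inv_mul_eq_one.mp this) ▸ rfl
    ext
    · exact hH
    · exact hJ
  have hcard' : Nat.card (H × J) = Nat.card G := by
    rw [Nat.card_prod]; exact hcard
  have hg_bij : Function.Bijective g :=
    (Nat.bijective_iff_injective_and_card g).2 ⟨hg_inj, hcard'⟩
  -- the homomorphism
  refine ⟨{ toFun := fun hj => ⟨(hj.1 : G) * (hj.2 : G)⁻¹, MulAut.conj (hj.2 : G)⟩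
            map_one' := by ext <;> simp
            map_mul' := by
              rintro ⟨h₁, j₁⟩ ⟨h₂, j₂⟩
              ext
              · show ((h₁ * h₂ : H) : G) * ((j₁ * j₂ : J) : G)⁻¹ =
                  (h₁ : G) * (j₁ : G)⁻¹ * ((j₁ : G) * ((h₂ : G) * (j₂ : G)⁻¹) * (j₁ : G)⁻¹)
                push_cast
                group
              · simp [SemidirectProduct.mul_right, MulAut.conj_apply, mul_assoc] }, ?_, ?_, ?_⟩
  · intro h j x
    show (h : G) * (j : G)⁻¹ * ((j : G) * x * (j : G)⁻¹) = (h : G) * x * (j : G)⁻¹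
    group
  · rw [injective_iff_map_eq_one]
    rintro ⟨h, j⟩ h1
    have hleft : (h : G) * (j : G)⁻¹ = 1 := congrArg SemidirectProduct.left h1
    have : (h : G) = j := by
      rw [mul_inv_eq_one] at hleft; exact hleft
    have hmem : (h : G) ∈ H ⊓ J := ⟨h.2, this ▸ j.2⟩
    rw [hinf, Subgroup.mem_bot] at hmem
    have hj1 : (j : G) = 1 := this ▸ hmem
    ext
    · exact hmem
    · exact hj1
  · intro x y
    -- f (h,j) = h * x * j⁻¹
    obtain ⟨⟨h₀, j₀⟩, hx⟩ := hg_bij.2 x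
    simp only [hg] at hx
    have hf : ∀ hj : H × J,
        holAct (⟨(hj.1 : G) * (hj.2 : G)⁻¹, MulAut.conj (hj.2 : G)⟩ : Hol G) x
          = g (hj.1 * h₀, hj.2 * j₀) := by
      rintro ⟨h, j⟩
      show (h : G) * (j : G)⁻¹ * ((j : G) * x * (j : G)⁻¹) = _
      simp only [hg]
      push_cast
      rw [← hx]
      group
    set τ : H × J ≃ H × J :=
      (Equiv.mulRight h₀).prodCongr (Equiv.mulRight j₀) with hτ
    have hfτ : ∀ hj : H × J,
        holAct (⟨(hj.1 : G) * (hj.2 : G)⁻¹, MulAut.conj (hj.2 : G)⟩ : Hol G) x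
          = g (τ hj) := fun hj => hf hj
    obtain ⟨⟨h₁, j₁⟩, hy⟩ := hg_bij.2 y
    refine ⟨τ.symm (h₁, j₁), ?_, ?_⟩
    · simp only [MonoidHom.coe_mk, OneHom.coe_mk]
      rw [hfτ, τ.apply_symm_apply, hy]
    · rintro hj hhj
      simp only [MonoidHom.coe_mk, OneHom.coe_mk] at hhj
      rw [hfτ] at hhj
      apply τ.injective
      rw [τ.apply_symm_apply]
      exact hg_inj (by rw [hhj, hy])
end

section
/- Let Γ and G be finite groups of the same order and β₁, β₂ : Γ → G homomorphisms forming a fixed-point free pair (β₁(σ) = β₂(σ) only when σ = e). Then β : Γ → Hol(G) defined by β(σ)(τ) = β₁(σ)·τ·β₂(σ)^{-1} is a regular embedding. -/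
/-- If `Γ`, `G` are finite groups of the same order and `β₁, β₂ : Γ → G` form a
fixed-point free pair, then `β(σ)(τ) = β₁(σ)·τ·β₂(σ)⁻¹` defines a regular embedding
`Γ → Hol(G)`. -/
theorem fpf_pair_gives_regular_embedding {Γ G : Type*} [Group Γ] [Finite Γ] [Group G]
    [Finite G] (hcard : Nat.card Γ = Nat.card G) (β₁ β₂ : Γ →* G)
    (hfpf : ∀ σ : Γ, β₁ σ = β₂ σ → σ = 1) :
    ∃ β : Γ →* Hol G,
      (∀ (σ : Γ) (τ : G), holAct (β σ) τ = β₁ σ * τ * (β₂ σ)⁻¹) ∧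
      Function.Injective β ∧
      ∀ x y : G, ∃! σ : Γ, holAct (β σ) x = y := by
  set β : Γ →* Hol G := MonoidHom.mk'
    (fun σ => ⟨β₁ σ * (β₂ σ)⁻¹, MulAut.conj (β₂ σ)⟩)
    (by
      intro σ ρ
      ext
      · simp [MulAut.conj_apply]
        group
      · simp) with hβ
  have hact : ∀ (σ : Γ) (τ : G), holAct (β σ) τ = β₁ σ * τ * (β₂ σ)⁻¹ := by
    intro σ τ
    simp [hβ, holAct, MulAut.conj_apply]
    group
  -- the map σ ↦ β σ • 1 = β₁ σ * (β₂ σ)⁻¹ is injective, hence bijective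
  have hg_inj : Function.Injective (fun σ => β₁ σ * (β₂ σ)⁻¹) := by
    intro σ ρ h
    have h' : β₁ σ * (β₂ σ)⁻¹ = β₁ ρ * (β₂ ρ)⁻¹ := h
    have : β₁ (ρ⁻¹ * σ) = β₂ (ρ⁻¹ * σ) := by
      simp only [map_mul, map_inv]
      calc (β₁ ρ)⁻¹ * β₁ σ = (β₁ ρ)⁻¹ * (β₁ σ * (β₂ σ)⁻¹) * β₂ σ := by group
        _ = (β₁ ρ)⁻¹ * (β₁ ρ * (β₂ ρ)⁻¹) * β₂ σ := by rw [h']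
        _ = (β₂ ρ)⁻¹ * β₂ σ := by group
    have := hfpf _ this
    rwa [inv_mul_eq_one, eq_comm] at this
  have hg_bij : Function.Bijective (fun σ => β₁ σ * (β₂ σ)⁻¹) :=
    (Nat.bijective_iff_injective_and_card _).mpr ⟨hg_inj, hcard⟩
  -- key cocycle property
  have hmul : ∀ (σ ρ : Γ) (x : G),
      β₁ (σ * ρ) * x * (β₂ (σ * ρ))⁻¹ = β₁ σ * (β₁ ρ * x * (β₂ ρ)⁻¹) * (β₂ σ)⁻¹ := by
    intro σ ρ x; simp only [map_mul]; group
  -- trivial stabilizers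
  have hstab : ∀ (σ : Γ) (x : G), β₁ σ * x * (β₂ σ)⁻¹ = x → σ = 1 := by
    intro σ x hx
    obtain ⟨σ₀, hσ₀⟩ := hg_bij.surjective x
    simp only at hσ₀
    have key : β₁ (σ₀⁻¹ * σ * σ₀) * 1 * (β₂ (σ₀⁻¹ * σ * σ₀))⁻¹ = 1 := by
      rw [hmul (σ₀⁻¹ * σ) σ₀ 1, mul_one, hσ₀, hmul σ₀⁻¹ σ x, hx, map_inv, map_inv, ← hσ₀]
      group
    have h1 : σ₀⁻¹ * σ * σ₀ = 1 := by
      apply hfpf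
      rw [mul_one, mul_inv_eq_one] at key
      exact key
    have h2 : σ = 1 := by
      have := congrArg (fun t => σ₀ * t * σ₀⁻¹) h1
      simpa [mul_assoc] using this
    exact h2
  refine ⟨β, hact, ?_, ?_⟩
  · intro σ ρ h
    apply hg_inj
    have := congrArg SemidirectProduct.left h
    simpa [hβ] using this
  · intro x y
    obtain ⟨σ₀, hσ₀⟩ := hg_bij.surjective x
    obtain ⟨σ₁, hσ₁⟩ := hg_bij.surjective y
    simp only at hσ₀ hσ₁
    set w : Γ := σ₁ * σ₀⁻¹ with hwdef
    have hw : β₁ w * x * (β₂ w)⁻¹ = y := by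
      have hinvx : β₁ σ₀⁻¹ * x * (β₂ σ₀⁻¹)⁻¹ = 1 := by
        rw [← hσ₀, map_inv, map_inv]; group
      calc β₁ (σ₁ * σ₀⁻¹) * x * (β₂ (σ₁ * σ₀⁻¹))⁻¹
          = β₁ σ₁ * (β₁ σ₀⁻¹ * x * (β₂ σ₀⁻¹)⁻¹) * (β₂ σ₁)⁻¹ := hmul _ _ _
        _ = y := by rw [hinvx, mul_one, hσ₁]
    refine ⟨w, ?_, ?_⟩
    · show holAct (β w) x = y
      rw [hact]; exact hw
    · intro ρ hρ
      rw [hact] at hρ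
      have hx : β₁ (w⁻¹ * ρ) * x * (β₂ (w⁻¹ * ρ))⁻¹ = x := by
        rw [hmul w⁻¹ ρ x, hρ, ← hw, ← hmul w⁻¹ w x]
        simp
      have := hstab _ _ hx
      rw [inv_mul_eq_one] at this
      exact this.symm
end

section
/- Let n ≥ 4 with n ≢ 2 (mod 4), and write n = 2^e·m with m odd. Let B = C_2^e × C_m, a group of order n. Then the image λ(B) of the left regular representation of B inside Perm(B) ≅ S_n consists entirely of even permutations, so λ(B) is a regular subgroup of A_n complementary to a point stabilizer A_{n-1}. -/
/-!
Every `b ∈ B = C₂^e × C_m` is `(v, 0) + (0, c)`. Translation by `(0, c)` has odd order `∣ m`, so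
its sign, a unit of `ℤ` whose odd power is `1`, is `1`. Translation by `(v, 0) ≠ 0` is a
fixed-point-free involution, i.e. `|B| / 2` disjoint transpositions, which is even because
`4 ∣ |B|` when `e ≥ 2`; `e = 1` is excluded by `n ≢ 2 (mod 4)`. The translations form a subgroup
of `Alt(B)` meeting the stabilizer of `0` trivially, and their number `|B|` is the index of that
stabilizer in `Alt(B)`, which acts transitively once `|B| ≥ 3`.
-/

open Equiv Equiv.Perm MulAction

theorem Equiv.Perm.sign_eq_one_of_pow_eq_one_of_odd {α : Type*} [Fintype α] [DecidableEq α]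
    {σ : Perm α} {k : ℕ} (hσ : σ ^ k = 1) (hk : Odd k) : sign σ = 1 := by
  have hsign : sign σ ^ k = 1 := by rw [← map_pow, hσ, map_one]
  rcases Int.units_eq_one_or (sign σ) with h | h
  · exact h
  · rw [h, hk.neg_one_pow] at hsign
    exact absurd hsign (by decide)

theorem Equiv.Perm.card_mul_card_stabilizer_inf_alternatingGroup {α : Type*} [Fintype α]
    [DecidableEq α] (h3 : 3 ≤ Nat.card α) (a : α) :
    Nat.card α * Nat.card (stabilizer (Perm α) a ⊓ alternatingGroup α : Subgroup (Perm α)) =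
      Nat.card (alternatingGroup α) := by
  have := alternatingGroup.isPretransitive_of_three_le_card α h3
  have hstab : (stabilizer (Perm α) a).subgroupOf (alternatingGroup α) =
      stabilizer (alternatingGroup α) a := rfl
  have hcard : Nat.card (stabilizer (Perm α) a ⊓ alternatingGroup α : Subgroup (Perm α)) =
      Nat.card (stabilizer (alternatingGroup α) a) := by
    rw [← hstab, ← Subgroup.inf_subgroupOf_right]
    exact Nat.card_congr (Subgroup.subgroupOfEquivOfLe inf_le_right).toEquiv.symm
  rw [hcard, ← index_stabilizer_of_transitive (alternatingGroup α) a, Subgroup.index_mul_card]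

section AddLeft

variable (G : Type*) [AddGroup G]

def addLeftSubgroup : Subgroup (Perm G) where
  carrier := Set.range Equiv.addLeft
  one_mem' := ⟨0, addLeft_zero⟩
  mul_mem' := by
    rintro _ _ ⟨a, rfl⟩ ⟨b, rfl⟩
    exact ⟨a + b, addLeft_add a b⟩
  inv_mem' := by
    rintro _ ⟨a, rfl⟩
    exact ⟨-a, (neg_addLeft a).symm⟩

theorem addLeft_injective : Function.Injective (Equiv.addLeft : G → Perm G) :=
  fun a b h => by simpa using (congr($h 0) : a + 0 = b + 0)

theorem card_addLeftSubgroup : Nat.card (addLeftSubgroup G) = Nat.card G :=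
  Nat.card_range_of_injective (f := Equiv.addLeft) (addLeft_injective G)

theorem addLeftSubgroup_inf_stabilizer_zero :
    addLeftSubgroup G ⊓ stabilizer (Perm G) (0 : G) = ⊥ := by
  refine eq_bot_iff.mpr ?_
  rintro _ ⟨⟨b, rfl⟩, hb⟩
  have hb0 : b = 0 := by simpa using (mem_stabilizer_iff.mp hb : b + 0 = 0)
  rw [Subgroup.mem_bot, hb0, addLeft_zero]

variable {G} [Fintype G] [DecidableEq G]

theorem sign_addLeft_of_nsmul_eq_zero_of_odd {b : G} {k : ℕ} (hb : k • b = 0) (hk : Odd k) :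
    sign (Equiv.addLeft b) = 1 :=
  sign_eq_one_of_pow_eq_one_of_odd (by rw [nsmul_addLeft, hb, addLeft_zero]) hk

theorem sign_addLeft_of_two_nsmul_eq_zero (h4 : 4 ∣ Fintype.card G) {b : G} (hb : 2 • b = 0) :
    sign (Equiv.addLeft b) = 1 := by
  by_cases hb0 : b = 0
  · simp [hb0]
  have hfix : Fintype.card (Function.fixedPoints (Equiv.addLeft b)) = 0 :=
    Fintype.card_eq_zero_iff.mpr ⟨fun ⟨x, hx⟩ => hb0 (add_eq_right.mp hx)⟩
  obtain ⟨k, hk⟩ := h4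
  rw [sign_of_pow_two_eq_one (by rw [nsmul_addLeft, hb, addLeft_zero]), hfix, hk,
    show (4 * k - 0) / 2 = 2 * k by omega, pow_mul, neg_one_sq, one_pow]

end AddLeft

theorem sign_addLeft_pi_zmod_two_prod_zmod {e m : ℕ} [NeZero m] (hm : Odd m) (he : e ≠ 1)
    (b : (Fin e → ZMod 2) × ZMod m) : sign (Equiv.addLeft b) = 1 := by
  obtain ⟨v, c⟩ := b
  have hc : sign (Equiv.addLeft ((0, c) : (Fin e → ZMod 2) × ZMod m)) = 1 :=
    sign_addLeft_of_nsmul_eq_zero_of_odd (k := m) (by ext <;> simp) hm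
  have hv : sign (Equiv.addLeft ((v, 0) : (Fin e → ZMod 2) × ZMod m)) = 1 := by
    rcases Nat.lt_or_ge e 2 with he0 | he2
    · obtain rfl : e = 0 := by omega
      rw [Subsingleton.elim v 0, Prod.mk_zero_zero, addLeft_zero, map_one]
    · refine sign_addLeft_of_two_nsmul_eq_zero ?_
        (by ext <;> simp [show (2 : ZMod 2) = 0 from rfl])
      simpa [ZMod.card] using (pow_dvd_pow 2 he2).mul_right m
  rw [show ((v, c) : (Fin e → ZMod 2) × ZMod m) = (v, 0) + (0, c) by simp, addLeft_add,
    map_mul, hv, hc, mul_one]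

/-- Let `n ≥ 4` with `n ≢ 2 (mod 4)`, and `n = 2^e·m` with `m` odd. With
`B = C₂^e × C_m`, every left translation of `B` is an even permutation, so the image of the
left regular representation of `B` is a regular subgroup of `Alt(B)` complementary to a
point stabilizer. -/
theorem regular_subgroup_of_alternating (n e m : ℕ) [NeZero m] (hn : 4 ≤ n)
    (hn2 : n % 4 ≠ 2) (hm : Odd m) (hnem : n = 2 ^ e * m) :
    (∀ b : (Fin e → ZMod 2) × ZMod m, Equiv.Perm.sign (Equiv.addLeft b) = 1) ∧
      ∃ J : Subgroup (Equiv.Perm ((Fin e → ZMod 2) × ZMod m)),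
        (J : Set (Equiv.Perm ((Fin e → ZMod 2) × ZMod m))) =
          Set.range (Equiv.addLeft : _ → Equiv.Perm ((Fin e → ZMod 2) × ZMod m)) ∧
        J ≤ alternatingGroup ((Fin e → ZMod 2) × ZMod m) ∧
        J ⊓ MulAction.stabilizer (Equiv.Perm ((Fin e → ZMod 2) × ZMod m))
            ((0 : (Fin e → ZMod 2) × ZMod m)) = ⊥ ∧
        Nat.card J *
            Nat.card
              ((MulAction.stabilizer (Equiv.Perm ((Fin e → ZMod 2) × ZMod m))
                  ((0 : (Fin e → ZMod 2) × ZMod m)) ⊓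
                alternatingGroup ((Fin e → ZMod 2) × ZMod m) :
                  Subgroup (Equiv.Perm ((Fin e → ZMod 2) × ZMod m)))) =
          Nat.card (alternatingGroup ((Fin e → ZMod 2) × ZMod m)) := by
  have he : e ≠ 1 := by
    rintro rfl
    obtain ⟨k, rfl⟩ := hm
    omega
  have hcard : Nat.card ((Fin e → ZMod 2) × ZMod m) = n := by simp [hnem]
  have hsign := sign_addLeft_pi_zmod_two_prod_zmod hm he
  refine ⟨hsign, addLeftSubgroup _, rfl, ?_, addLeftSubgroup_inf_stabilizer_zero _, ?_⟩
  · rintro _ ⟨b, rfl⟩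
    exact mem_alternatingGroup.mpr (hsign b)
  · rw [card_addLeftSubgroup, card_mul_card_stabilizer_inf_alternatingGroup (by omega)]
end

section
/- In G = SU_4(2) (matrices M in SL_4(F_4) with M·F·M̄ = F for the standard hyperbolic Hermitian form F), the matrices A and B given explicitly (A with rows (1,ω,1,ω²),(ω²,1,ω,1),(1,ω²,1,ω),(ω²,ω,ω,ω²) and B with rows (1,1,0,0),(1,0,0,0),(0,0,1,0),(0,0,0,1), where ω² + ω + 1 = 0 in F_4) satisfy A⁹ = B³ = I, A³ ≠ I, and B·A = A⁴·B, and hence generate a subgroup of order 27. -/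
/-! ### A computable model of `𝔽₄` on `Bool × Bool` -/

def Fc := Bool × Bool

instance : DecidableEq Fc := inferInstanceAs (DecidableEq (Bool × Bool))
instance : Fintype Fc := inferInstanceAs (Fintype (Bool × Bool))
instance : Zero Fc := ⟨(false, false)⟩
instance : One Fc := ⟨(true, false)⟩
instance : Add Fc := ⟨fun p q => (xor p.1 q.1, xor p.2 q.2)⟩
instance : Mul Fc := ⟨fun p q => (xor (p.1 && q.1) (p.2 && q.2),
  xor (p.1 && q.2) (xor (p.2 && q.1) (p.2 && q.2)))⟩
instance : Neg Fc := ⟨fun p => p⟩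

instance : CommRing Fc where
  nsmul := nsmulRec
  zsmul := zsmulRec
  add_assoc := by decide
  zero_add := by decide
  add_zero := by decide
  add_comm := by decide
  left_distrib := by decide
  right_distrib := by decide
  zero_mul := by decide
  mul_zero := by decide
  mul_assoc := by decide
  one_mul := by decide
  mul_one := by decide
  mul_comm := by decide
  neg_add_cancel := by decide

def wc : Fc := (false, true)
def Ac : Matrix (Fin 4) (Fin 4) Fc :=
  !![1, wc, 1, wc^2; wc^2, 1, wc, 1; 1, wc^2, 1, wc; wc^2, wc, wc, wc^2]
def Bc : Matrix (Fin 4) (Fin 4) Fc := !![1,1,0,0; 1,0,0,0; 0,0,1,0; 0,0,0,1]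
def Fmc : Matrix (Fin 4) (Fin 4) Fc := !![0,1,0,0; 1,0,0,0; 0,0,0,1; 0,0,1,0]

section hom

variable {ω : GaloisField 2 2} (hω : ω ^ 2 + ω + 1 = 0)

local notation "F4" => GaloisField 2 2

/-- Indicator `Bool → 𝔽₄`. -/
noncomputable def bc (x : Bool) : F4 := if x then 1 else 0

lemma bc_and (x y : Bool) : bc (x && y) = bc x * bc y := by
  cases x <;> cases y <;> simp [bc]

lemma bc_xor (x y : Bool) : bc (xor x y) = bc x + bc y := by
  cases x <;> cases y <;> simp [bc, CharTwo.add_self_eq_zero]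

include hω in
lemma hω2 : ω ^ 2 = ω + 1 := by
  linear_combination hω - CharTwo.add_self_eq_zero (R := F4) (ω + 1)

include hω in
lemma ωne0 : ω ≠ 0 := by
  intro h; rw [h] at hω; simp at hω

include hω in
lemma ωne1 : ω ≠ 1 := by
  intro h; rw [h] at hω
  have h2 := CharTwo.add_self_eq_zero (R := F4) 1
  have : (1 : F4) = 0 := by linear_combination hω - h2
  exact one_ne_zero this

/-- The embedding `Fc →+* 𝔽₄` sending the generator to `ω`. -/
noncomputable def φ (ω : F4) (hω : ω ^ 2 + ω + 1 = 0) : Fc →+* F4 where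
  toFun p := bc p.1 + bc p.2 * ω
  map_one' := by simp [bc]
  map_zero' := by simp [bc]
  map_add' p q := by
    show bc (xor p.1 q.1) + bc (xor p.2 q.2) * ω = bc p.1 + bc p.2 * ω + (bc q.1 + bc q.2 * ω)
    rw [bc_xor, bc_xor]; ring
  map_mul' p q := by
    show bc (xor (p.1 && q.1) (p.2 && q.2)) +
      bc (xor (p.1 && q.2) (xor (p.2 && q.1) (p.2 && q.2))) * ω =
      (bc p.1 + bc p.2 * ω) * (bc q.1 + bc q.2 * ω)
    simp only [bc_xor, bc_and]
    linear_combination (-(bc p.2 * bc q.2)) * hω +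
      CharTwo.add_self_eq_zero (R := F4) (bc p.2 * bc q.2 * (ω + 1))

include hω in
lemma φ_inj : Function.Injective (φ ω hω) := by
  intro p q h
  have key : ∀ r : Fc, φ ω hω r = 0 → r = 0 := by
    intro r hr
    rcases r with ⟨a, b⟩
    cases a <;> cases b
    · rfl
    · exfalso; apply ωne0 hω
      simpa [φ, bc] using hr
    · exfalso; apply one_ne_zero (α := F4)
      simpa [φ, bc] using hr
    · exfalso
      have h1ω : (1 : F4) + ω = 0 := by simpa [φ, bc] using hr
      apply ωne1 hω
      have h2 := CharTwo.add_self_eq_zero (R := F4) 1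
      linear_combination h1ω - h2
  have hs := key (p - q) (by rw [map_sub, h, sub_self])
  exact sub_eq_zero.mp hs

lemma φ_w : φ ω hω wc = ω := by simp [φ, wc, bc]

end hom

section monoidlemmas

variable {M : Type*} [Monoid M] {a b : M}

lemma b_pow_a (hc : b * a = a ^ 4 * b) : ∀ k : ℕ, b * a ^ k = a ^ (4 * k) * b := by
  intro k
  induction k with
  | zero => simp
  | succ k ih =>
      calc b * a ^ (k + 1) = (b * a ^ k) * a := by rw [pow_succ, mul_assoc]
        _ = a ^ (4 * k) * (b * a) := by rw [ih, mul_assoc]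
        _ = a ^ (4 * k) * a ^ 4 * b := by rw [hc, mul_assoc]
        _ = a ^ (4 * (k + 1)) * b := by rw [← pow_add]; ring_nf

lemma b_pow_a_pow (hc : b * a = a ^ 4 * b) :
    ∀ j k : ℕ, b ^ j * a ^ k = a ^ (4 ^ j * k) * b ^ j := by
  intro j
  induction j with
  | zero => intro k; simp
  | succ j ih =>
      intro k
      calc b ^ (j + 1) * a ^ k = b ^ j * (b * a ^ k) := by rw [pow_succ, mul_assoc]
        _ = b ^ j * (a ^ (4 * k) * b) := by rw [b_pow_a hc]
        _ = (b ^ j * a ^ (4 * k)) * b := by rw [mul_assoc]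
        _ = a ^ (4 ^ j * (4 * k)) * b ^ j * b := by rw [ih]
        _ = a ^ (4 ^ (j + 1) * k) * b ^ (j + 1) := by
              rw [mul_assoc, ← pow_succ]
              congr 1
              ring_nf

lemma prod_form (hc : b * a = a ^ 4 * b) (i j k l : ℕ) :
    (a ^ i * b ^ j) * (a ^ k * b ^ l) = a ^ (i + 4 ^ j * k) * b ^ (j + l) := by
  calc (a ^ i * b ^ j) * (a ^ k * b ^ l) = a ^ i * (b ^ j * a ^ k) * b ^ l := by
        rw [mul_assoc, mul_assoc, mul_assoc]
    _ = a ^ i * a ^ (4 ^ j * k) * b ^ j * b ^ l := by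
        rw [b_pow_a_pow hc]
        group
    _ = a ^ (i + 4 ^ j * k) * b ^ (j + l) := by
        rw [← pow_add, mul_assoc, ← pow_add]

end monoidlemmas

set_option maxRecDepth 20000 in
/-- In `G = SU₄(2)` (matrices `M ∈ SL₄(𝔽₄)` with `M·F·M̄ = F` for the standard hyperbolic
Hermitian form `F`, where `M̄` is the conjugate transpose under `x ↦ x²`), the explicit
matrices `A`, `B` satisfy `A⁹ = B³ = I`, `A³ ≠ I`, `B·A = A⁴·B`, and generate a subgroup
of order `27`. -/
theorem su4_order27_subgroup (ω : GaloisField 2 2) (hω : ω ^ 2 + ω + 1 = 0) :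
    let F4 := GaloisField 2 2
    let conjT : Matrix (Fin 4) (Fin 4) F4 → Matrix (Fin 4) (Fin 4) F4 :=
      fun M => Matrix.transpose (M.map (fun x => x ^ 2))
    let Fm : Matrix (Fin 4) (Fin 4) F4 := !![0,1,0,0; 1,0,0,0; 0,0,0,1; 0,0,1,0]
    let A : Matrix (Fin 4) (Fin 4) F4 :=
      !![1, ω, 1, ω^2; ω^2, 1, ω, 1; 1, ω^2, 1, ω; ω^2, ω, ω, ω^2]
    let B : Matrix (Fin 4) (Fin 4) F4 := !![1,1,0,0; 1,0,0,0; 0,0,1,0; 0,0,0,1]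
    A.det = 1 ∧ B.det = 1 ∧ A * Fm * conjT A = Fm ∧ B * Fm * conjT B = Fm ∧
      A ^ 9 = 1 ∧ B ^ 3 = 1 ∧ A ^ 3 ≠ 1 ∧ B * A = A ^ 4 * B ∧
      Nat.card (Submonoid.closure {A, B} : Submonoid (Matrix (Fin 4) (Fin 4) F4)) = 27 := by
  intro F4 conjT Fm A B
  -- decidable facts in the computable model
  have d1 : Ac.det = 1 := by decide
  have d2 : Bc.det = 1 := by decide
  have d3 : Ac * Fmc * (Ac.map (fun x => x ^ 2)).transpose = Fmc := by decide
  have d4 : Bc * Fmc * (Bc.map (fun x => x ^ 2)).transpose = Fmc := by decide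
  have d5 : Ac ^ 9 = 1 := by decide
  have d6 : Bc ^ 3 = 1 := by decide
  have d7 : Ac ^ 3 ≠ 1 := by decide
  have d8 : Bc * Ac = Ac ^ 4 * Bc := by decide
  have d9 : ∀ p q : Fin 9 × Fin 3,
      Ac ^ (p.1 : ℕ) * Bc ^ (p.2 : ℕ) = Ac ^ (q.1 : ℕ) * Bc ^ (q.2 : ℕ) → p = q := by decide
  -- transport along the ring hom
  set ψ := φ ω hω with hψ
  have hψw : ψ wc = ω := φ_w hω
  have hψw2 : ψ (wc ^ 2) = ω ^ 2 := by rw [map_pow, hψw]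
  have hA : A = Ac.map ψ := by
    show (!![1, ω, 1, ω^2; ω^2, 1, ω, 1; 1, ω^2, 1, ω; ω^2, ω, ω, ω^2]
      : Matrix (Fin 4) (Fin 4) (GaloisField 2 2)) = Ac.map ψ
    ext i j
    fin_cases i <;> fin_cases j <;>
      simp [Ac, Matrix.map_apply, hψw, hψw2, Matrix.vecHead, Matrix.vecTail]
  have hB : B = Bc.map ψ := by
    show (!![1,1,0,0; 1,0,0,0; 0,0,1,0; 0,0,0,1]
      : Matrix (Fin 4) (Fin 4) (GaloisField 2 2)) = Bc.map ψ
    ext i j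
    fin_cases i <;> fin_cases j <;>
      simp [Bc, Matrix.map_apply, Matrix.vecHead, Matrix.vecTail]
  have hFm : Fm = Fmc.map ψ := by
    show (!![0,1,0,0; 1,0,0,0; 0,0,0,1; 0,0,1,0]
      : Matrix (Fin 4) (Fin 4) (GaloisField 2 2)) = Fmc.map ψ
    ext i j
    fin_cases i <;> fin_cases j <;>
      simp [Fmc, Matrix.map_apply, Matrix.vecHead, Matrix.vecTail]
  set Ψ : Matrix (Fin 4) (Fin 4) Fc →+* Matrix (Fin 4) (Fin 4) (GaloisField 2 2) :=
    ψ.mapMatrix with hΨ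
  have hΨapp : ∀ X : Matrix (Fin 4) (Fin 4) Fc, Ψ X = X.map ψ := fun _ => rfl
  have hΨinj : Function.Injective Ψ := Matrix.map_injective (φ_inj hω)
  have hA' : A = Ψ Ac := by rw [hΨapp]; exact hA
  have hB' : B = Ψ Bc := by rw [hΨapp]; exact hB
  have hFm' : Fm = Ψ Fmc := by rw [hΨapp]; exact hFm
  have hsq : ∀ X : Matrix (Fin 4) (Fin 4) Fc,
      (X.map ψ).map (fun x => x ^ 2) = (X.map (fun x => x ^ 2)).map ψ := by
    intro X
    rw [Matrix.map_map, Matrix.map_map]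
    congr 1
    funext x
    simp [Function.comp_def, map_pow]
  have hconjA : conjT A = Ψ ((Ac.map (fun x => x ^ 2)).transpose) := by
    show (A.map (fun x => x ^ 2)).transpose = _
    rw [hA, hsq, hΨapp, ← Matrix.transpose_map]
  have hconjB : conjT B = Ψ ((Bc.map (fun x => x ^ 2)).transpose) := by
    show (B.map (fun x => x ^ 2)).transpose = _
    rw [hB, hsq, hΨapp, ← Matrix.transpose_map]
  -- the eight basic facts
  have fdetA : A.det = 1 := by
    rw [hA', hΨ, ← RingHom.map_det, d1, map_one]
  have fdetB : B.det = 1 := by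
    rw [hB', hΨ, ← RingHom.map_det, d2, map_one]
  have fhermA : A * Fm * conjT A = Fm := by
    rw [hconjA, hA', hFm', ← map_mul, ← map_mul, d3]
  have fhermB : B * Fm * conjT B = Fm := by
    rw [hconjB, hB', hFm', ← map_mul, ← map_mul, d4]
  have fA9 : A ^ 9 = 1 := by rw [hA', ← map_pow, d5, map_one]
  have fB3 : B ^ 3 = 1 := by rw [hB', ← map_pow, d6, map_one]
  have fA3 : A ^ 3 ≠ 1 := by
    rw [hA', ← map_pow]
    intro h
    exact d7 (hΨinj (by rw [h, map_one]))
  have frel : B * A = A ^ 4 * B := by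
    rw [hA', hB', ← map_mul, ← map_pow, ← map_mul, d8]
  refine ⟨fdetA, fdetB, fhermA, fhermB, fA9, fB3, fA3, frel, ?_⟩
  -- the order-27 computation
  have hAmem : A ∈ Submonoid.closure ({A, B} : Set (Matrix (Fin 4) (Fin 4) F4)) :=
    Submonoid.subset_closure (by simp)
  have hBmem : B ∈ Submonoid.closure ({A, B} : Set (Matrix (Fin 4) (Fin 4) F4)) :=
    Submonoid.subset_closure (by simp)
  set S := (Submonoid.closure ({A, B} : Set (Matrix (Fin 4) (Fin 4) F4))) with hS
  let f : Fin 9 × Fin 3 → S := fun p =>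
    ⟨A ^ (p.1 : ℕ) * B ^ (p.2 : ℕ), mul_mem (pow_mem hAmem _) (pow_mem hBmem _)⟩
  have hpowmap : ∀ i j : ℕ, A ^ i * B ^ j = Ψ (Ac ^ i * Bc ^ j) := by
    intro i j
    rw [hA', hB', ← map_pow, ← map_pow, ← map_mul]
  have finj : Function.Injective f := by
    intro p q h
    apply d9
    apply hΨinj
    have h' : A ^ (p.1 : ℕ) * B ^ (p.2 : ℕ) = A ^ (q.1 : ℕ) * B ^ (q.2 : ℕ) :=
      congrArg Subtype.val h
    rw [hpowmap, hpowmap] at h'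
    exact h'
  have hmodA : ∀ i : ℕ, A ^ i = A ^ (i % 9) := by
    intro i
    conv_lhs => rw [← Nat.div_add_mod i 9]
    rw [pow_add, pow_mul, fA9, one_pow, one_mul]
  have hmodB : ∀ j : ℕ, B ^ j = B ^ (j % 3) := by
    intro j
    conv_lhs => rw [← Nat.div_add_mod j 3]
    rw [pow_add, pow_mul, fB3, one_pow, one_mul]
  have fsurj : Function.Surjective f := by
    rintro ⟨x, hx⟩
    have hdesc : ∃ i j : ℕ, x = A ^ i * B ^ j := by
      induction hx using Submonoid.closure_induction with
      | mem y hy =>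
          simp only [Set.mem_insert_iff, Set.mem_singleton_iff] at hy
          rcases hy with hy | hy
          · exact ⟨1, 0, by simp [hy]⟩
          · exact ⟨0, 1, by simp [hy]⟩
      | one => exact ⟨0, 0, by simp⟩
      | mul x y hx hy ihx ihy =>
          obtain ⟨i, j, rfl⟩ := ihx
          obtain ⟨k, l, rfl⟩ := ihy
          exact ⟨i + 4 ^ j * k, j + l, prod_form frel i j k l⟩
    obtain ⟨i, j, rfl⟩ := hdesc
    refine ⟨(⟨i % 9, Nat.mod_lt _ (by norm_num)⟩, ⟨j % 3, Nat.mod_lt _ (by norm_num)⟩), ?_⟩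
    apply Subtype.ext
    show A ^ (i % 9) * B ^ (j % 3) = A ^ i * B ^ j
    rw [← hmodA, ← hmodB]
  have hcard := Nat.card_eq_of_bijective f ⟨finj, fsurj⟩
  rw [← hcard]
  simp
end
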